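/- Let G be a directed partially ordered group, n ≥ 1, and E = Γ(ℤ ⃗× G, (n,0)). Then the pair (ℤ ⃗× G, γ), where γ : E → ℤ ⃗× G is the inclusion, is a universal group for E: γ(E) generates ℤ ⃗× G, and for every group K and every K-valued measure φ : E → K (φ(a+b) = φ(a)+φ(b) whenever a+b exists in E), there exists a unique group homomorphism φ* : ℤ ⃗× G → K with φ = φ* ∘ γ. -/

import Mathlib

/-- A pseudo-effect algebra (PEA): a structure with a partial addition `add`
(with domain of definition `D`), a zero and a one, satisfying (PE1)-(PE4)
together with the (derivable) neutrality of zero. -/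
structure PEA (E : Type) where
  /-- `D a b` means that the partial sum `a + b` is defined. -/
  D : E → E → Prop
  /-- The partial addition (its value is relevant only when `D a b` holds). -/
  add : E → E → E
  zero : E
  one : E
  /-- (PE1), definedness part. -/
  assoc_defined : ∀ a b c, (D a b ∧ D (add a b) c) ↔ (D b c ∧ D a (add b c))
  /-- (PE1), equality part. -/
  assoc_eq : ∀ a b c, D a b → D (add a b) c → add (add a b) c = add a (add b c)
  /-- (PE2), right complement. -/
  compl_right : ∀ a, ∃! d, D a d ∧ add a d = one
  /-- (PE2), left complement. -/
  compl_left : ∀ a, ∃! e, D e a ∧ add e a = one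
  /-- (PE3). -/
  pe3 : ∀ a b, D a b →
    (∃ d, D d a ∧ add d a = add a b) ∧ (∃ e, D b e ∧ add b e = add a b)
  /-- (PE4). -/
  pe4_right : ∀ a, D a one → a = zero
  pe4_left : ∀ a, D one a → a = zero
  D_zero_right : ∀ a, D a zero
  D_zero_left : ∀ a, D zero a
  add_zero : ∀ a, add a zero = a
  zero_add : ∀ a, add zero a = a

namespace PEA

variable {E : Type} (P : PEA E)

/-- The induced partial order: `a ≤ b` iff `a + c = b` for some `c`. -/
def le (a b : E) : Prop := ∃ c, P.D a c ∧ P.add a c = b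

/-- The left complement `a⁻`, the unique element with `a⁻ + a = 1`. -/
noncomputable def lneg (a : E) : E := (P.compl_left a).choose

/-- The right complement `a~`, the unique element with `a + a~ = 1`. -/
noncomputable def rneg (a : E) : E := (P.compl_right a).choose

/-- `E` is weakly commutative if `a + b` is defined iff `b + a` is defined. -/
def WeaklyCommutative : Prop := ∀ a b, P.D a b ↔ P.D b a

/-- `E` is symmetric if the two complements coincide. -/
def Symmetric : Prop := ∀ a, P.lneg a = P.rneg a

/-- A state on a PEA: a `[0,1]`-valued map, additive on existing sums, sending
`0 ↦ 0` and `1 ↦ 1`. -/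
def IsState (s : E → ℝ) : Prop :=
  s P.zero = 0 ∧ s P.one = 1 ∧ (∀ a, 0 ≤ s a ∧ s a ≤ 1) ∧
    ∀ a b, P.D a b → s (P.add a b) = s a + s b

/-- An `(n+1)`-valued discrete state: a state whose range is `{0, 1/n, …, 1}`. -/
def IsDiscreteState (n : ℕ) (s : E → ℝ) : Prop :=
  P.IsState s ∧ Set.range s = {x : ℝ | ∃ i ≤ n, x = (i : ℝ) / n}

/-- An ideal: a nonempty downward closed subset closed under existing sums. -/
def IsIdeal (I : Set E) : Prop :=
  I.Nonempty ∧ (∀ a i, i ∈ I → P.le a i → a ∈ I) ∧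
    ∀ i j, i ∈ I → j ∈ I → P.D i j → P.add i j ∈ I

/-- A normal ideal: `a + i = j + a` implies `i ∈ I ↔ j ∈ I`. -/
def IsNormalIdeal (I : Set E) : Prop :=
  P.IsIdeal I ∧ ∀ a i j, P.D a i → P.D j a → P.add a i = P.add j a → (i ∈ I ↔ j ∈ I)

/-- A maximal ideal: proper and not properly contained in a proper ideal. -/
def IsMaximalIdeal (I : Set E) : Prop :=
  P.IsIdeal I ∧ P.one ∉ I ∧ ∀ J, P.IsIdeal J → P.one ∉ J → I ⊆ J → I = J

/-- `n`-fold partial multiple of an element. -/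
def nmul : ℕ → E → E
  | 0, _ => P.zero
  | k + 1, a => P.add (nmul k a) a

/-- Definedness of the `n`-fold partial multiple. -/
def nmulD : ℕ → E → Prop
  | 0, _ => True
  | k + 1, a => nmulD k a ∧ P.D (P.nmul k a) a

/-- The set of elements of infinite isotropic index. -/
def Infinit : Set E := {a | ∀ k, P.nmulD k a}

/-- An `n`-decomposition of a PEA. -/
def IsNDecomp (n : ℕ) (F : ℕ → Set E) : Prop :=
  (∀ i, i ≤ n → (F i).Nonempty) ∧
  (∀ i j, i ≤ n → j ≤ n → i ≠ j → F i ∩ F j = ∅) ∧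
  ((⋃ i ∈ Set.Iic n, F i) = Set.univ) ∧
  (∀ i, i ≤ n → P.lneg '' F i = F (n - i) ∧ P.rneg '' F i = F (n - i)) ∧
  (∀ i j, i ≤ n → j ≤ n → ∀ x ∈ F i, ∀ y ∈ F j, P.D x y →
     i + j ≤ n ∧ P.add x y ∈ F (i + j))

/-- An `n`-perfect PEA: an `n`-decomposition with all sums `Eᵢ + Eⱼ`, `i+j < n`,
existing, and whose bottom slice is the unique maximal ideal. -/
def IsNPerfect (n : ℕ) (F : ℕ → Set E) : Prop :=
  P.IsNDecomp n F ∧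
  (∀ i j, i + j < n → ∀ x ∈ F i, ∀ y ∈ F j, P.D x y) ∧
  (P.IsMaximalIdeal (F 0) ∧ ∀ J, P.IsMaximalIdeal J → J = F 0)

end PEA

set_option linter.unusedSectionVars false
section IntervalPEA

variable {H : Type} [AddGroup H] [PartialOrder H]
  [CovariantClass H H (· + ·) (· ≤ ·)]
  [CovariantClass H H (Function.swap (· + ·)) (· ≤ ·)]

/-- The carrier of the interval `Γ(H, u) = [0, u]` in a po-group `H`. -/
def GammaSet (u : H) : Type := {x : H // 0 ≤ x ∧ x ≤ u}

namespace GammaInterval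

variable (u : H) (hu : 0 ≤ u)

/-- Definedness of the partial addition of `Γ(H,u)`. -/
def gD (a b : GammaSet u) : Prop := a.1 + b.1 ≤ u

open Classical in
/-- The partial addition of `Γ(H,u)` (junk value `0` outside its domain). -/
noncomputable def gadd (a b : GammaSet u) : GammaSet u :=
  if h : a.1 + b.1 ≤ u then ⟨a.1 + b.1, add_nonneg a.2.1 b.2.1, h⟩
  else ⟨0, le_refl 0, hu⟩

lemma gadd_val {a b : GammaSet u} (h : gD u a b) :
    (gadd u hu a b).1 = a.1 + b.1 := by
  have h' : a.1 + b.1 ≤ u := h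
  unfold gadd
  first
    | exact congrArg (fun z : {x : H // 0 ≤ x ∧ x ≤ u} => z.1) (dif_pos h')
    | simp [h']

/-- The interval `Γ(H, u)` as a pseudo-effect algebra. -/
noncomputable def Gamma : PEA (GammaSet u) where
  D := gD u
  add := gadd u hu
  zero := ⟨0, le_refl 0, hu⟩
  one := ⟨u, hu, le_refl u⟩
  assoc_defined := by
    intro a b c
    constructor
    · rintro ⟨h1, h2⟩
      have h2a : (gadd u hu a b).1 + c.1 ≤ u := h2
      have h2' : a.1 + b.1 + c.1 ≤ u := by rwa [gadd_val u hu h1] at h2a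
      have h3 : a.1 + (b.1 + c.1) ≤ u := by rwa [← add_assoc]
      have hbc : gD u b c := le_trans (le_add_of_nonneg_left a.2.1) h3
      refine ⟨hbc, ?_⟩
      show a.1 + (gadd u hu b c).1 ≤ u
      rwa [gadd_val u hu hbc]
    · rintro ⟨h1, h2⟩
      have h2a : a.1 + (gadd u hu b c).1 ≤ u := h2
      have h2' : a.1 + (b.1 + c.1) ≤ u := by rwa [gadd_val u hu h1] at h2a
      have hab : gD u a b :=
        le_trans (add_le_add_right (le_add_of_nonneg_right c.2.1) a.1) h2'
      refine ⟨hab, ?_⟩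
      show (gadd u hu a b).1 + c.1 ≤ u
      rw [gadd_val u hu hab, add_assoc]
      exact h2'
  assoc_eq := by
    intro a b c h1 h2
    have h2' : a.1 + b.1 + c.1 ≤ u := by
      have h2a : (gadd u hu a b).1 + c.1 ≤ u := h2
      rwa [gadd_val u hu h1] at h2a
    have h3 : a.1 + (b.1 + c.1) ≤ u := by rwa [← add_assoc]
    have hbc : gD u b c := le_trans (le_add_of_nonneg_left a.2.1) h3
    have habc : gD u a (gadd u hu b c) := by
      show a.1 + (gadd u hu b c).1 ≤ u
      rwa [gadd_val u hu hbc]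
    apply Subtype.ext
    rw [gadd_val u hu h2, gadd_val u hu h1, gadd_val u hu habc, gadd_val u hu hbc,
      add_assoc]
  compl_right := by
    intro a
    have h1 : (0 : H) ≤ -a.1 + u := by
      rw [le_neg_add_iff_add_le, add_zero]; exact a.2.2
    have h2 : -a.1 + u ≤ u := by
      simpa using add_le_add_right (neg_nonpos.mpr a.2.1) u
    have hD : gD u a ⟨-a.1 + u, h1, h2⟩ := by
      show a.1 + (-a.1 + u) ≤ u
      rw [add_neg_cancel_left]
    refine ⟨⟨-a.1 + u, h1, h2⟩, ⟨hD, ?_⟩, ?_⟩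
    · apply Subtype.ext
      rw [gadd_val u hu hD]
      exact add_neg_cancel_left a.1 u
    · rintro y ⟨hy1, hy2⟩
      apply Subtype.ext
      have hv := congrArg Subtype.val hy2
      rw [gadd_val u hu hy1] at hv
      show y.1 = -a.1 + u
      rw [eq_neg_add_iff_add_eq]
      exact hv
  compl_left := by
    intro a
    have h1 : (0 : H) ≤ u + -a.1 := by
      simpa using add_le_add_right a.2.2 (-a.1)
    have h2 : u + -a.1 ≤ u := by
      simpa using add_le_add_left (neg_nonpos.mpr a.2.1) u
    have hD : gD u ⟨u + -a.1, h1, h2⟩ a := by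
      show (u + -a.1) + a.1 ≤ u
      rw [neg_add_cancel_right]
    refine ⟨⟨u + -a.1, h1, h2⟩, ⟨hD, ?_⟩, ?_⟩
    · apply Subtype.ext
      rw [gadd_val u hu hD]
      exact neg_add_cancel_right u a.1
    · rintro y ⟨hy1, hy2⟩
      apply Subtype.ext
      have hv := congrArg Subtype.val hy2
      rw [gadd_val u hu hy1] at hv
      show y.1 = u + -a.1
      rw [eq_add_neg_iff_add_eq]
      exact hv
  pe3 := by
    intro a b h
    constructor
    · have h1 : (0 : H) ≤ a.1 + b.1 + -a.1 := by
        have : a.1 + 0 + -a.1 ≤ a.1 + b.1 + -a.1 :=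
          add_le_add_left (add_le_add_right b.2.1 a.1) (-a.1)
        simpa using this
      have h2 : a.1 + b.1 + -a.1 ≤ u := by
        calc a.1 + b.1 + -a.1 ≤ u + -a.1 := add_le_add_left h (-a.1)
          _ ≤ u + 0 := add_le_add_right (neg_nonpos.mpr a.2.1) u
          _ = u := add_zero u
      have hD : gD u ⟨a.1 + b.1 + -a.1, h1, h2⟩ a := by
        show (a.1 + b.1 + -a.1) + a.1 ≤ u
        rw [neg_add_cancel_right]
        exact h
      refine ⟨⟨a.1 + b.1 + -a.1, h1, h2⟩, hD, ?_⟩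
      apply Subtype.ext
      rw [gadd_val u hu hD, gadd_val u hu h]
      exact neg_add_cancel_right (a.1 + b.1) a.1
    · have h1 : (0 : H) ≤ -b.1 + (a.1 + b.1) := by
        have : -b.1 + b.1 ≤ -b.1 + (a.1 + b.1) :=
          add_le_add_right (le_add_of_nonneg_left a.2.1) (-b.1)
        simpa using this
      have h2 : -b.1 + (a.1 + b.1) ≤ u := by
        calc -b.1 + (a.1 + b.1) ≤ -b.1 + u := add_le_add_right h (-b.1)
          _ ≤ 0 + u := add_le_add_left (neg_nonpos.mpr b.2.1) u
          _ = u := zero_add u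
      have hD : gD u b ⟨-b.1 + (a.1 + b.1), h1, h2⟩ := by
        show b.1 + (-b.1 + (a.1 + b.1)) ≤ u
        rw [add_neg_cancel_left]
        exact h
      refine ⟨⟨-b.1 + (a.1 + b.1), h1, h2⟩, hD, ?_⟩
      apply Subtype.ext
      rw [gadd_val u hu hD, gadd_val u hu h]
      exact add_neg_cancel_left b.1 (a.1 + b.1)
  pe4_right := by
    intro a h
    apply Subtype.ext
    have h' : a.1 + u ≤ u := h
    have h'' : a.1 + u + -u ≤ u + -u := add_le_add_left h' (-u)
    simp only [add_neg_cancel_right, add_neg_cancel] at h''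
    exact le_antisymm h'' a.2.1
  pe4_left := by
    intro a h
    apply Subtype.ext
    have h' : u + a.1 ≤ u := h
    have h'' : -u + (u + a.1) ≤ -u + u := add_le_add_right h' (-u)
    simp only [neg_add_cancel_left, neg_add_cancel] at h''
    exact le_antisymm h'' a.2.1
  D_zero_right := by
    intro a
    show a.1 + 0 ≤ u
    simpa using a.2.2
  D_zero_left := by
    intro a
    show 0 + a.1 ≤ u
    simpa using a.2.2
  add_zero := by
    intro a
    apply Subtype.ext
    have h : gD u a ⟨0, le_refl 0, hu⟩ := by
      show a.1 + 0 ≤ u; simpa using a.2.2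
    rw [gadd_val u hu h]
    exact add_zero a.1
  zero_add := by
    intro a
    apply Subtype.ext
    have h : gD u ⟨0, le_refl 0, hu⟩ a := by
      show 0 + a.1 ≤ u; simpa using a.2.2
    rw [gadd_val u hu h]
    exact zero_add a.1

end GammaInterval

end IntervalPEA

section ZLexSection

/-- The lexicographic product `ℤ ⃗× G`. -/
def ZLex (G : Type) : Type := ℤ × G

namespace ZLex

variable {G : Type} [AddGroup G] [PartialOrder G]
  [CovariantClass G G (· + ·) (· ≤ ·)]
  [CovariantClass G G (Function.swap (· + ·)) (· ≤ ·)]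

instance : AddGroup (ZLex G) := inferInstanceAs (AddGroup (ℤ × G))

/-- Build an element of `ℤ ⃗× G`. -/
def mk (i : ℤ) (g : G) : ZLex G := ((i, g) : ℤ × G)

/-- First (integer) component. -/
def idx (x : ZLex G) : ℤ := (x : ℤ × G).1

/-- Second (group) component. -/
def snd (x : ZLex G) : G := (x : ℤ × G).2

instance : PartialOrder (ZLex G) where
  le p q := idx p < idx q ∨ (idx p = idx q ∧ snd p ≤ snd q)
  le_refl p := Or.inr ⟨rfl, le_refl _⟩
  le_trans p q r := by
    rintro (h | ⟨e, h⟩) (h' | ⟨e', h'⟩)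
    · exact Or.inl (lt_trans h h')
    · exact Or.inl (lt_of_lt_of_eq h e')
    · exact Or.inl (lt_of_eq_of_lt e h')
    · exact Or.inr ⟨e.trans e', le_trans h h'⟩
  le_antisymm p q := by
    rintro (h | ⟨e, h⟩) (h' | ⟨e', h'⟩)
    · exact absurd (lt_trans h h') (lt_irrefl _)
    · exact absurd h (by rw [e']; exact lt_irrefl _)
    · exact absurd h' (by rw [e]; exact lt_irrefl _)
    · have h2 : snd p = snd q := le_antisymm h h'
      show ((idx p, snd p) : ℤ × G) = ((idx q, snd q) : ℤ × G)
      rw [e, h2]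

lemma le_def (p q : ZLex G) :
    p ≤ q ↔ idx p < idx q ∨ (idx p = idx q ∧ snd p ≤ snd q) := Iff.rfl

lemma add_def (p q : ZLex G) :
    p + q = mk (idx p + idx q) (snd p + snd q) := rfl

instance : CovariantClass (ZLex G) (ZLex G) (· + ·) (· ≤ ·) := by
  constructor
  rintro c a b (h | ⟨e, h⟩)
  · exact Or.inl (Int.add_lt_add_left h _)
  · exact Or.inr ⟨by show idx c + idx a = idx c + idx b; rw [e],
      add_le_add_right h _⟩

instance : CovariantClass (ZLex G) (ZLex G) (Function.swap (· + ·)) (· ≤ ·) := by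
  constructor
  rintro c a b (h | ⟨e, h⟩)
  · exact Or.inl (Int.add_lt_add_right h _)
  · exact Or.inr ⟨by show idx a + idx c = idx b + idx c; rw [e],
      add_le_add_left h _⟩

end ZLex

end ZLexSection

/-! A measure `φ` on `Γ(ℤ ⃗× G, (n, 0))` is determined by its restriction to the bottom level
`{0} × G⁺` and by `e = φ (1, 0)`. The restriction is additive on the positive cone, so, `G` being
directed, it extends to a homomorphism `F : G →+ K`. Splitting `(1, 0) = (0, c) + (1, -c) =
(1, -c) + (0, c)` shows that `e` commutes with `F`, hence `(i, g) ↦ i • e + F g` is a homomorphism.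
It agrees with `φ` because every element of level `k + 1` is the sum of one of level `k` and one of
level `1`. Uniqueness holds because the interval generates `ℤ ⃗× G`. -/

section ConeExtension

variable {G K : Type*} [AddGroup G] [PartialOrder G] [AddLeftMono G] [AddGroup K]

lemma exists_nonneg_sub_eq [IsDirectedOrder G] (g : G) :
    ∃ c d : G, 0 ≤ c ∧ 0 ≤ d ∧ g = c - d := by
  obtain ⟨c, hgc, hc⟩ := exists_ge_ge g 0
  exact ⟨c, -g + c, hc, le_neg_add_iff_add_le.mpr (by simpa using hgc), by simp [sub_eq_add_neg]⟩

lemma AddMonoidHom.addCommute_of_forall_nonneg [IsDirectedOrder G] (F : G →+ K) {e : K}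
    (h : ∀ c, 0 ≤ c → AddCommute e (F c)) (g : G) : AddCommute e (F g) := by
  obtain ⟨c, d, hc, hd, rfl⟩ := exists_nonneg_sub_eq g
  rw [map_sub, sub_eq_add_neg]
  exact (h c hc).add_right (h d hd).neg_right

variable {f : G → K}

lemma cone_sub_eq_of_le (hf : ∀ a b, 0 ≤ a → 0 ≤ b → f (a + b) = f a + f b)
    {g c d : G} (hc : 0 ≤ c) (hgc : g ≤ c) (hcd : c ≤ d) :
    f d - f (-g + d) = f c - f (-g + c) := by
  have hs : 0 ≤ -c + d := le_neg_add_iff_add_le.mpr (by simpa using hcd)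
  have hgc' : 0 ≤ -g + c := le_neg_add_iff_add_le.mpr (by simpa using hgc)
  calc f d - f (-g + d) = f (c + (-c + d)) - f ((-g + c) + (-c + d)) := by
        simp only [add_assoc, add_neg_cancel_left]
    _ = f c - f (-g + c) := by rw [hf _ _ hc hs, hf _ _ hgc' hs, add_sub_add_right_eq_sub]

variable [IsDirectedOrder G]

/-- Since `g = c - (-g + c)` with `0 ≤ c` and `0 ≤ -g + c` for any upper bound `c` of `g` and `0`,
an extension of `f` must take this value; by `coneExtend_eq` it does not depend on `c`. -/
noncomputable def coneExtend (f : G → K) (g : G) : K :=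
  f (exists_ge_ge g 0).choose - f (-g + (exists_ge_ge g 0).choose)

lemma coneExtend_eq (hf : ∀ a b, 0 ≤ a → 0 ≤ b → f (a + b) = f a + f b)
    {g c : G} (hc : 0 ≤ c) (hgc : g ≤ c) : coneExtend f g = f c - f (-g + c) := by
  obtain ⟨hgd, hd⟩ := (exists_ge_ge g 0).choose_spec
  obtain ⟨e, hde, hce⟩ := exists_ge_ge (exists_ge_ge g 0).choose c
  rw [coneExtend, ← cone_sub_eq_of_le hf hd hgd hde, cone_sub_eq_of_le hf hc hgc hce]

lemma coneExtend_add (hf : ∀ a b, 0 ≤ a → 0 ≤ b → f (a + b) = f a + f b) (g h : G) :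
    coneExtend f (g + h) = coneExtend f g + coneExtend f h := by
  obtain ⟨b₀, hhb, hgb⟩ := exists_ge_ge h (-g)
  obtain ⟨b, hb₀, hb⟩ := exists_ge_ge b₀ 0
  have hgb' : 0 ≤ g + b := by simpa using add_le_add_right (hgb.trans hb₀) g
  rw [coneExtend_eq hf hgb' (le_add_of_nonneg_right hb),
    coneExtend_eq hf hb (hhb.trans hb₀),
    coneExtend_eq hf hgb' (add_le_add_right (hhb.trans hb₀) g)]
  simp only [neg_add_rev, add_assoc, neg_add_cancel_left, sub_add_sub_cancel]

theorem exists_addMonoidHom_eq_of_nonneg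
    (hf : ∀ a b, 0 ≤ a → 0 ≤ b → f (a + b) = f a + f b) :
    ∃ F : G →+ K, ∀ g, 0 ≤ g → F g = f g := by
  have hf0 : f 0 = 0 := by simpa using hf 0 0 le_rfl le_rfl
  refine ⟨AddMonoidHom.mk' (coneExtend f) (coneExtend_add hf), fun g hg => ?_⟩
  simp [coneExtend_eq hf hg le_rfl, hf0]

end ConeExtension

def PEA.IsMeasure {E : Type} {K : Type*} [Add K] (P : PEA E) (φ : E → K) : Prop :=
  ∀ a b, P.D a b → φ (P.add a b) = φ a + φ b

namespace GammaInterval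

variable {H : Type} {K : Type*} [AddGroup H] [PartialOrder H] [AddLeftMono H] [AddRightMono H]
  [AddGroup K] {u : H} {hu : 0 ≤ u}

lemma _root_.PEA.IsMeasure.apply_eq_add_of_val_add_eq {φ : GammaSet u → K}
    (hφ : (Gamma u hu).IsMeasure φ) {a b c : GammaSet u} (h : a.1 + b.1 = c.1) :
    φ c = φ a + φ b := by
  have hab : gD u a b := show a.1 + b.1 ≤ u from h ▸ c.2.2
  rw [← hφ a b hab]
  exact congrArg φ (Subtype.ext ((gadd_val u hu hab).trans h)).symm

lemma isMeasure_addMonoidHom_comp_val (ψ : H →+ K) :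
    (Gamma u hu).IsMeasure fun x => ψ x.1 := fun a b hab => by
  simp only [Gamma, gadd_val u hu hab, map_add]

end GammaInterval

namespace ZLex

open GammaInterval

variable {G : Type} [AddGroup G] [PartialOrder G] [AddLeftMono G] [AddRightMono G]

@[simp] lemma idx_mk (i : ℤ) (g : G) : idx (mk i g) = i := rfl

@[simp] lemma snd_mk (i : ℤ) (g : G) : snd (mk i g) = g := rfl

@[simp] lemma idx_add (x y : ZLex G) : idx (x + y) = idx x + idx y := rfl

@[simp] lemma snd_add (x y : ZLex G) : snd (x + y) = snd x + snd y := rfl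

@[simp] lemma idx_sub (x y : ZLex G) : idx (x - y) = idx x - idx y := rfl

@[simp] lemma snd_sub (x y : ZLex G) : snd (x - y) = snd x - snd y := rfl

@[simp] lemma idx_zsmul (i : ℤ) (x : ZLex G) : idx (i • x) = i • idx x := rfl

@[simp] lemma snd_zsmul (i : ℤ) (x : ZLex G) : snd (i • x) = i • snd x := rfl

lemma ext {x y : ZLex G} (hidx : idx x = idx y) (hsnd : snd x = snd y) : x = y :=
  Prod.ext hidx hsnd

lemma idx_mono : Monotone (idx : ZLex G → ℤ) := by
  rintro x y (h | ⟨h, -⟩)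
  exacts [h.le, h.le]

lemma snd_nonneg_of_idx_eq_zero {x : ZLex G} (hx : 0 ≤ x) (h : idx x = 0) : 0 ≤ snd x := by
  rcases hx with h' | ⟨-, h'⟩
  · exact absurd h (ne_of_gt h')
  · exact h'

lemma mk_mem_gamma {i n : ℤ} {g : G} (hi : 0 ≤ i) (hin : i < n) (hg : 0 ≤ g) :
    0 ≤ mk i g ∧ mk i g ≤ mk n 0 :=
  ⟨hi.lt_or_eq.imp id fun h => ⟨h, hg⟩, Or.inl hin⟩

lemma mk_one_mem_gamma {n : ℤ} {g : G} (hn : 1 ≤ n) (hg : g ≤ 0) :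
    0 ≤ mk 1 g ∧ mk 1 g ≤ mk n 0 :=
  ⟨Or.inl one_pos, hn.lt_or_eq.imp id fun h => ⟨h, hg⟩⟩

variable [IsDirectedOrder G]

theorem closure_range_val_eq_top {n : ℤ} (hn : 1 ≤ n) :
    AddSubgroup.closure (Set.range fun x : GammaSet (mk n (0 : G)) => x.1) = ⊤ := by
  set S := AddSubgroup.closure (Set.range fun x : GammaSet (mk n (0 : G)) => x.1)
  have h₁ : mk 1 0 ∈ S := AddSubgroup.subset_closure ⟨⟨_, mk_one_mem_gamma hn le_rfl⟩, rfl⟩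
  have h₀ : ∀ c : G, 0 ≤ c → mk 0 c ∈ S := fun c hc =>
    AddSubgroup.subset_closure ⟨⟨_, mk_mem_gamma le_rfl (by omega) hc⟩, rfl⟩
  refine eq_top_iff.mpr fun x _ => ?_
  obtain ⟨c, d, hc, hd, hx⟩ := exists_nonneg_sub_eq (snd x)
  have hx' : x = idx x • mk 1 0 + (mk 0 c - mk 0 d) := ext (by simp) (by simp [hx])
  rw [hx']
  exact add_mem (zsmul_mem h₁ _) (sub_mem (h₀ c hc) (h₀ d hd))

variable {K : Type*} [AddGroup K]

theorem measure_ext {n : ℤ} {hu : (0 : ZLex G) ≤ mk n 0} {φ φ' : GammaSet (mk n (0 : G)) → K}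
    (hφ : (Gamma _ hu).IsMeasure φ) (hφ' : (Gamma _ hu).IsMeasure φ')
    (h₀ : ∀ x : GammaSet (mk n (0 : G)), idx x.1 = 0 → φ x = φ' x)
    (h₁ : ∀ x : GammaSet (mk n (0 : G)), idx x.1 = 1 → snd x.1 ≤ 0 → φ x = φ' x) :
    φ = φ' := by
  suffices h : ∀ k : ℕ, ∀ x : GammaSet (mk n (0 : G)), idx x.1 = k → φ x = φ' x by
    funext x
    obtain ⟨k, hk⟩ := Int.eq_ofNat_of_zero_le (idx_mono x.2.1)
    exact h k x hk
  intro k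
  induction k with
  | zero => exact h₀
  | succ k ih =>
    intro x hx
    obtain ⟨c, hgc, hc⟩ := exists_ge_ge (snd x.1) 0
    have hkn : (k : ℤ) + 1 ≤ n := by simpa [hx] using idx_mono x.2.2
    let a : GammaSet (mk n (0 : G)) := ⟨mk k c, mk_mem_gamma (by positivity) (by omega) hc⟩
    let b : GammaSet (mk n (0 : G)) :=
      ⟨mk 1 (-c + snd x.1), mk_one_mem_gamma (by omega) (neg_add_nonpos_iff.mpr hgc)⟩
    have hab : a.1 + b.1 = x.1 := ext (by simp [a, b, hx]) (by simp [a, b])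
    rw [hφ.apply_eq_add_of_val_add_eq hab, hφ'.apply_eq_add_of_val_add_eq hab,
      ih a rfl, h₁ b rfl (neg_add_nonpos_iff.mpr hgc)]

theorem exists_addMonoidHom_apply_snd_eq {n : ℤ} (hn : 0 < n) {hu : (0 : ZLex G) ≤ mk n 0}
    {φ : GammaSet (mk n (0 : G)) → K} (hφ : (Gamma _ hu).IsMeasure φ) :
    ∃ F : G →+ K, ∀ x : GammaSet (mk n (0 : G)), idx x.1 = 0 → F (snd x.1) = φ x := by
  classical
  let f : G → K := fun g => if hg : 0 ≤ g then φ ⟨mk 0 g, mk_mem_gamma le_rfl hn hg⟩ else 0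
  have hf : ∀ a b, 0 ≤ a → 0 ≤ b → f (a + b) = f a + f b := by
    intro a b ha hb
    simp only [f, dif_pos ha, dif_pos hb, dif_pos (add_nonneg ha hb)]
    exact hφ.apply_eq_add_of_val_add_eq (ext (by simp) (by simp))
  obtain ⟨F, hF⟩ := exists_addMonoidHom_eq_of_nonneg hf
  refine ⟨F, fun x hx => ?_⟩
  have hsnd := snd_nonneg_of_idx_eq_zero x.2.1 hx
  rw [hF _ hsnd]
  simp only [f, dif_pos hsnd]
  exact congrArg φ (Subtype.ext (ext (by simp [hx]) rfl))

theorem exists_addMonoidHom_apply_val_eq {n : ℤ} (hn : 1 ≤ n) {hu : (0 : ZLex G) ≤ mk n 0}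
    {φ : GammaSet (mk n (0 : G)) → K} (hφ : (Gamma _ hu).IsMeasure φ) :
    ∃ ψ : ZLex G →+ K, ∀ x, ψ x.1 = φ x := by
  obtain ⟨F, hF⟩ := exists_addMonoidHom_apply_snd_eq (by omega) hφ
  let e := φ ⟨mk 1 0, mk_one_mem_gamma hn le_rfl⟩
  -- `(1, 0) = x + (0, -snd x) = (0, -snd x) + x` for `x` of level `1`
  have he : ∀ x : GammaSet (mk n (0 : G)), idx x.1 = 1 → snd x.1 ≤ 0 →
      e = φ x + F (-snd x.1) ∧ e = F (-snd x.1) + φ x := by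
    intro x hx hsnd
    let y : GammaSet (mk n (0 : G)) :=
      ⟨mk 0 (-snd x.1), mk_mem_gamma le_rfl (by omega) (neg_nonneg.mpr hsnd)⟩
    rw [show F (-snd x.1) = φ y from hF y rfl]
    exact ⟨hφ.apply_eq_add_of_val_add_eq (ext (by simp [y, hx]) (by simp [y])),
      hφ.apply_eq_add_of_val_add_eq (ext (by simp [y, hx]) (by simp [y]))⟩
  have hcomm : ∀ g, AddCommute e (F g) := F.addCommute_of_forall_nonneg fun c hc => by
    have hc' : -c ≤ 0 := neg_nonpos.mpr hc
    obtain ⟨h₁, h₂⟩ := he ⟨mk 1 (-c), mk_one_mem_gamma hn hc'⟩ rfl hc'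
    simp only [snd_mk, neg_neg] at h₁ h₂
    show e + F c = F c + e
    conv_lhs => rw [h₂]
    rw [add_assoc, ← h₁]
  let ψ : ZLex G →+ K := (zmultiplesHom K e).noncommCoprod F fun i g => (hcomm g).zsmul_left i
  have hψ : ∀ x, ψ x = idx x • e + F (snd x) := fun x => AddMonoidHom.noncommCoprod_apply ..
  refine ⟨ψ, congrFun (measure_ext (isMeasure_addMonoidHom_comp_val ψ) hφ ?_ ?_)⟩
  · intro x hx
    rw [hψ, hx, zero_zsmul, zero_add, hF x hx]
  · intro x hx hsnd
    rw [hψ, hx, one_zsmul, (he x hx hsnd).1, add_assoc, ← map_add, neg_add_cancel, map_zero,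
      add_zero]

end ZLex

/-- `(ℤ ⃗× G, γ)`, with `γ` the inclusion of `Γ(ℤ ⃗× G, (n,0))`,
is a universal group for `Γ(ℤ ⃗× G, (n,0))`: the image of `γ` generates
`ℤ ⃗× G`, and every group-valued measure on the PEA factors uniquely through
`γ` by a group homomorphism. -/
theorem stmt18 (G : Type) [AddGroup G] [PartialOrder G]
    [CovariantClass G G (· + ·) (· ≤ ·)]
    [CovariantClass G G (Function.swap (· + ·)) (· ≤ ·)]
    (hdir : ∀ a b : G, ∃ c : G, a ≤ c ∧ b ≤ c)
    (n : ℕ) (hn : 1 ≤ n)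
    (P : PEA (GammaSet (ZLex.mk (n : ℤ) (0 : G))))
    (hP : P = GammaInterval.Gamma (ZLex.mk (n : ℤ) (0 : G)) (by exact Or.inl (show (0 : ℤ) < (n : ℤ) by exact_mod_cast hn))) :
    AddSubgroup.closure
      (Set.range (fun x : GammaSet (ZLex.mk (n : ℤ) (0 : G)) => x.1)) = ⊤ ∧
    ∀ (K : Type) (_ : AddGroup K) (φ : GammaSet (ZLex.mk (n : ℤ) (0 : G)) → K),
      (∀ a b, P.D a b → φ (P.add a b) = φ a + φ b) →
      ∃! ψ : ZLex G →+ K,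
        ∀ x : GammaSet (ZLex.mk (n : ℤ) (0 : G)), ψ x.1 = φ x := by
  subst hP
  have : IsDirectedOrder G := ⟨hdir⟩
  have hn' : (1 : ℤ) ≤ n := by exact_mod_cast hn
  have hgen := ZLex.closure_range_val_eq_top (G := G) hn'
  refine ⟨hgen, fun K _ φ hφ => ?_⟩
  obtain ⟨ψ, hψ⟩ := ZLex.exists_addMonoidHom_apply_val_eq hn' hφ
  refine ⟨ψ, hψ, fun ψ' hψ' => AddMonoidHom.eq_of_eqOn_dense hgen ?_⟩
  rintro _ ⟨x, rfl⟩
  exact (hψ' x).trans (hψ x).symm
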